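/- arXiv:2601.05025 — 3 statements merged into one kernel-verified Lean document; each statement's English description precedes it below -/
import Mathlib

section
/- Let A be a (nonzero) C*-algebra and let T : A → A be a positive bounded linear operator. Then the spectral radius r(T) is an element of the spectrum σ(T) of T. -/
/-!
For `|λ| > r(T)` the resolvent `R(λ) = (λ - T)⁻¹` is the Neumann series `∑ λ⁻¹ ^ (n + 1) • Tⁿ`.
On a positive `x` its terms are the positive elements `Tⁿ x`, with coefficients dominated in
modulus by those of the series at `|λ|`; since order-bounded elements are norm-bounded and every
element is a combination of four positive ones of no larger norm, `‖R(λ)‖ ≤ 24 ‖R(|λ|)‖`.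
If `r(T) ∉ σ(T)`, then `R` is bounded near `r(T)`, so `R(t μ)` stays bounded as `t ↓ 1` for some
`μ ∈ σ(T)` with `|μ| = r(T)`; but `‖R(λ)‖ ≥ 1 / |λ - μ|` blows up there.
-/

open Complex Filter Topology
open scoped ENNReal NNReal ComplexStarModule

namespace spectrum

theorem spectralRadius_lt_nnnorm_of_toReal_lt {𝕜 B : Type*} [NormedField 𝕜] [NormedRing B]
    [NormedAlgebra 𝕜 B] [CompleteSpace B] [NormOneClass B] {a : B} {z : 𝕜}
    (h : (spectralRadius 𝕜 a).toReal < ‖z‖) : spectralRadius 𝕜 a < ‖z‖₊ := by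
  have hr : spectralRadius 𝕜 a ≠ ⊤ :=
    ne_top_of_le_ne_top ENNReal.coe_ne_top (spectralRadius_le_nnnorm a)
  rwa [← ENNReal.ofReal_toReal hr,
    ENNReal.ofReal_lt_iff_lt_toReal ENNReal.toReal_nonneg ENNReal.coe_ne_top,
    ENNReal.coe_toReal, coe_nnnorm]

variable {B : Type*} [NormedRing B] [NormedAlgebra ℂ B] [CompleteSpace B]

theorem hasSum_inverse_one_sub_smul (a : B) {w : ℂ}
    (hw : (‖w‖₊ : ℝ≥0∞) < (spectralRadius ℂ a)⁻¹) :
    HasSum (fun n : ℕ => w ^ n • a ^ n) (Ring.inverse (1 - w • a)) := by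
  obtain ⟨r, hwr, hr⟩ := ENNReal.lt_iff_exists_nnreal_btwn.mp hw
  have hr0 : 0 < r := by exact_mod_cast hwr.trans_le' zero_le
  have hball := (hasFPowerSeriesOnBall_inverse_one_sub_smul ℂ a).exchange_radius
    ((differentiableOn_inverse_one_sub_smul hr).hasFPowerSeriesOnBall hr0)
  simpa using hball.hasSum (mem_eball_zero_iff.mpr hwr)

theorem hasSum_resolvent (a : B) {z : ℂ} (hz : spectralRadius ℂ a < ‖z‖₊) :
    HasSum (fun n : ℕ => z⁻¹ ^ (n + 1) • a ^ n) (resolvent a z) := by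
  have hz0 : z ≠ 0 := by rintro rfl; simp at hz
  have hw : (‖z⁻¹‖₊ : ℝ≥0∞) < (spectralRadius ℂ a)⁻¹ := by
    rwa [nnnorm_inv, ENNReal.coe_inv (nnnorm_ne_zero_iff.mpr hz0), ENNReal.inv_lt_inv]
  have hres : resolvent a z = z⁻¹ • Ring.inverse (1 - z⁻¹ • a) := by
    have := units_smul_resolvent_self (r := Units.mk0 z hz0) (a := a)
    simp only [Units.smul_def, Units.val_inv_eq_inv_val, Units.val_mk0, resolvent, map_one] at this
    rw [← this, smul_smul, inv_mul_cancel₀ hz0, one_smul, resolvent]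
  rw [hres]
  simpa [smul_smul, pow_succ'] using (hasSum_inverse_one_sub_smul a hw).const_smul z⁻¹

theorem exists_norm_eq_toReal_spectralRadius [Nontrivial B] (a : B) :
    ∃ μ ∈ spectrum ℂ a, ‖μ‖ = (spectralRadius ℂ a).toReal := by
  obtain ⟨μ, hμ, hμr⟩ := exists_nnnorm_eq_spectralRadius a
  exact ⟨μ, hμ, by simp [← hμr]⟩

theorem one_le_norm_sub_mul_norm_resolvent [NormOneClass B] {a : B} {μ k : ℂ}
    (hμ : μ ∈ spectrum ℂ a) (hk : k ∈ resolventSet ℂ a) :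
    1 ≤ ‖k - μ‖ * ‖resolvent a k‖ := by
  have : Nontrivial B := NormOneClass.nontrivial
  by_contra! h
  have hclose : ‖(algebraMap ℂ B μ - a) - hk.unit‖ < ‖(↑hk.unit⁻¹ : B)‖⁻¹ := by
    rw [hk.unit_spec, sub_sub_sub_cancel_right, ← map_sub, norm_algebraMap', norm_sub_rev,
      ← one_div, lt_div_iff₀ (Units.norm_pos _), ← resolvent_eq hk]
    exact h
  exact hμ (hk.unit.ofNearby _ hclose).isUnit

theorem tendsto_norm_resolvent_atTop [NormOneClass B] {a : B} {μ : ℂ}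
    (hμ : μ ∈ spectrum ℂ a) :
    Tendsto (fun k => ‖resolvent a k‖) (𝓝[resolventSet ℂ a] μ) atTop := by
  have hpos : ∀ k ∈ resolventSet ℂ a, 0 < ‖k - μ‖ := fun k hk =>
    norm_pos_iff.mpr (sub_ne_zero.mpr fun h => hμ (h ▸ hk))
  have hdist : Tendsto (fun k => ‖k - μ‖) (𝓝[resolventSet ℂ a] μ) (𝓝[>] 0) := by
    refine tendsto_nhdsWithin_iff.mpr ⟨?_, eventually_nhdsWithin_of_forall hpos⟩
    exact (Continuous.tendsto' (by fun_prop) μ 0 (by simp)).mono_left nhdsWithin_le_nhds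
  refine tendsto_atTop_mono' _ (eventually_nhdsWithin_of_forall fun k hk => ?_)
    hdist.inv_tendsto_nhdsGT_zero
  exact (inv_le_iff_one_le_mul₀' (hpos k hk)).mpr (one_le_norm_sub_mul_norm_resolvent hμ hk)

end spectrum

section RealImaginaryPart

variable {E : Type*} [NormedAddCommGroup E] [NormedSpace ℂ E] [StarAddMonoid E] [StarModule ℂ E]
  [ContinuousStar E] {ι : Type*} {x : ι → E}

theorem HasSum.re_smul_of_isSelfAdjoint (hx : ∀ n, IsSelfAdjoint (x n)) {c : ι → ℂ} {u : E}
    (hu : HasSum (fun n => c n • x n) u) : HasSum (fun n => (c n).re • x n) (ℜ u : E) := by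
  have hcont : Continuous (fun a : E => (ℜ a : E)) := by
    simp_rw [realPart_apply_coe]; fun_prop
  convert hu.map ((selfAdjoint.submodule ℝ E).subtype.comp realPart) hcont using 1
  · funext n
    change _ = ((ℜ (c n • x n) : selfAdjoint E) : E)
    rw [realPart_smul, (hx n).imaginaryPart, smul_zero, sub_zero, selfAdjoint.val_smul,
      (hx n).coe_realPart]
  · rfl

theorem HasSum.im_smul_of_isSelfAdjoint (hx : ∀ n, IsSelfAdjoint (x n)) {c : ι → ℂ} {u : E}
    (hu : HasSum (fun n => c n • x n) u) : HasSum (fun n => (c n).im • x n) (ℑ u : E) := by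
  have hcont : Continuous (fun a : E => (ℑ a : E)) := by
    simp_rw [imaginaryPart_apply_coe]; fun_prop
  convert hu.map ((selfAdjoint.submodule ℝ E).subtype.comp imaginaryPart) hcont using 1
  · funext n
    change _ = ((ℑ (c n • x n) : selfAdjoint E) : E)
    rw [imaginaryPart_smul, (hx n).imaginaryPart, smul_zero, _root_.zero_add, selfAdjoint.val_smul,
      (hx n).coe_realPart]
  · rfl

end RealImaginaryPart

theorem ContinuousLinearMap.pow_apply_nonneg {R M : Type*} [Semiring R] [TopologicalSpace M]
    [AddCommMonoid M] [Module R M] [Preorder M] {T : M →L[R] M} (hT : ∀ x, 0 ≤ x → 0 ≤ T x)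
    (n : ℕ) {x : M} (hx : 0 ≤ x) : 0 ≤ (T ^ n) x := by
  induction n with
  | zero => simpa
  | succ n ih => rw [pow_succ', mul_apply_eq_comp]; exact hT _ ih

section CStarAlgebra

variable {A : Type*} [NonUnitalCStarAlgebra A] [PartialOrder A] [StarOrderedRing A]

theorem norm_le_three_mul_of_neg_le_of_le {u v : A} (hvu : -v ≤ u) (huv : u ≤ v) :
    ‖u‖ ≤ 3 * ‖v‖ := by
  have hsum : ‖u + v‖ ≤ ‖v + v‖ :=
    CStarAlgebra.norm_le_norm_of_nonneg_of_le (neg_le_iff_add_nonneg.mp hvu) (by gcongr)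
  calc ‖u‖ = ‖(u + v) - v‖ := by rw [add_sub_cancel_right]
    _ ≤ ‖u + v‖ + ‖v‖ := norm_sub_le _ _
    _ ≤ ‖v‖ + ‖v‖ + ‖v‖ := by grw [hsum, norm_add_le]
    _ = 3 * ‖v‖ := by ring

variable {ι : Type*} {x : ι → A}

theorem norm_le_three_mul_of_hasSum_of_abs_le (hx : ∀ n, 0 ≤ x n) {t d : ι → ℝ}
    (htd : ∀ n, |t n| ≤ d n) {u v : A} (hu : HasSum (fun n => t n • x n) u)
    (hv : HasSum (fun n => d n • x n) v) : ‖u‖ ≤ 3 * ‖v‖ :=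
  norm_le_three_mul_of_neg_le_of_le
    (hasSum_le (fun n => by
      rw [← neg_smul]; exact smul_le_smul_of_nonneg_right (neg_le_of_abs_le (htd n)) (hx n))
      hv.neg hu)
    (hasSum_le (fun n => smul_le_smul_of_nonneg_right (le_of_abs_le (htd n)) (hx n)) hu hv)

theorem norm_le_six_mul_of_hasSum_of_norm_le (hx : ∀ n, 0 ≤ x n) {c : ι → ℂ} {d : ι → ℝ}
    (hcd : ∀ n, ‖c n‖ ≤ d n) {u v : A} (hu : HasSum (fun n => c n • x n) u)
    (hv : HasSum (fun n => d n • x n) v) : ‖u‖ ≤ 6 * ‖v‖ := by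
  have hsa : ∀ n, IsSelfAdjoint (x n) := fun n => (hx n).isSelfAdjoint
  have hre := norm_le_three_mul_of_hasSum_of_abs_le hx
    (fun n => (abs_re_le_norm _).trans (hcd n)) (hu.re_smul_of_isSelfAdjoint hsa) hv
  have him := norm_le_three_mul_of_hasSum_of_abs_le hx
    (fun n => (abs_im_le_norm _).trans (hcd n)) (hu.im_smul_of_isSelfAdjoint hsa) hv
  calc ‖u‖ = ‖(ℜ u : A) + I • (ℑ u : A)‖ := by rw [realPart_add_I_smul_imaginaryPart]
    _ ≤ ‖(ℜ u : A)‖ + ‖(ℑ u : A)‖ := by grw [norm_add_le, norm_smul, norm_I, one_mul]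
    _ ≤ 6 * ‖v‖ := by linarith

theorem ContinuousLinearMap.opNorm_le_four_mul_of_forall_nonneg {F : Type*}
    [NormedAddCommGroup F] [NormedSpace ℂ F] (S : A →L[ℂ] F) {C : ℝ} (hC : 0 ≤ C)
    (h : ∀ x, 0 ≤ x → ‖S x‖ ≤ C * ‖x‖) : ‖S‖ ≤ 4 * C := by
  refine S.opNorm_le_bound (by positivity) fun x => ?_
  obtain ⟨y, hy_nonneg, hy_norm, rfl⟩ := CStarAlgebra.exists_sum_four_nonneg x
  calc ‖S (∑ i : Fin 4, I ^ (i : ℕ) • y i)‖ = ‖∑ i : Fin 4, I ^ (i : ℕ) • S (y i)‖ := by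
        simp only [map_sum, map_smul]
    _ ≤ ∑ i : Fin 4, ‖I ^ (i : ℕ) • S (y i)‖ := norm_sum_le _ _
    _ = ∑ i : Fin 4, ‖S (y i)‖ := by simp only [norm_smul, norm_pow, norm_I, one_pow, one_mul]
    _ ≤ ∑ _i : Fin 4, C * ‖∑ i : Fin 4, I ^ (i : ℕ) • y i‖ :=
        Finset.sum_le_sum fun i _ => (h _ (hy_nonneg i)).trans (by gcongr; exact hy_norm i)
    _ = 4 * C * ‖∑ i : Fin 4, I ^ (i : ℕ) • y i‖ := by simp [mul_assoc]

variable {T : A →L[ℂ] A}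

theorem norm_resolvent_apply_le (hT : ∀ x, 0 ≤ x → 0 ≤ T x) {l : ℂ}
    (hl : spectralRadius ℂ T < ‖l‖₊) {x : A} (hx : 0 ≤ x) :
    ‖resolvent T l x‖ ≤ 6 * ‖resolvent T (‖l‖ : ℂ) x‖ := by
  have hl' : spectralRadius ℂ T < ‖(‖l‖ : ℂ)‖₊ := by simpa using hl
  have hu := (spectrum.hasSum_resolvent T hl).mapL (ContinuousLinearMap.apply ℂ A x)
  have hv := (spectrum.hasSum_resolvent T hl').mapL (ContinuousLinearMap.apply ℂ A x)
  refine norm_le_six_mul_of_hasSum_of_norm_le (c := fun n => l⁻¹ ^ (n + 1))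
    (d := fun n => ‖l‖⁻¹ ^ (n + 1)) (fun n => ContinuousLinearMap.pow_apply_nonneg hT n hx)
    (fun n => by simp) ?_ ?_
  · simpa using hu
  · simpa [← Complex.coe_smul] using hv

theorem norm_resolvent_le (hT : ∀ x, 0 ≤ x → 0 ≤ T x) {l : ℂ}
    (hl : spectralRadius ℂ T < ‖l‖₊) :
    ‖resolvent T l‖ ≤ 24 * ‖resolvent T (‖l‖ : ℂ)‖ := by
  refine ((resolvent T l).opNorm_le_four_mul_of_forall_nonneg
    (C := 6 * ‖resolvent T (‖l‖ : ℂ)‖) (by positivity)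
    fun x hx => (norm_resolvent_apply_le hT hl hx).trans ?_).trans_eq (by ring)
  grw [ContinuousLinearMap.le_opNorm]
  rw [mul_assoc]

end CStarAlgebra

/-- For a positive bounded operator `T` on a (nonzero) C*-algebra `A`, the spectral radius
`r(T)` belongs to the spectrum of `T`. -/
theorem spectralRadius_mem_spectrum_of_positive
    {A : Type*} [NonUnitalCStarAlgebra A] [PartialOrder A] [StarOrderedRing A] [Nontrivial A]
    (T : A →L[ℂ] A) (hT : ∀ x : A, 0 ≤ x → 0 ≤ T x) :
    (((spectralRadius ℂ T).toReal : ℝ) : ℂ) ∈ spectrum ℂ T := by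
  obtain ⟨μ, hμ, hμρ⟩ := spectrum.exists_norm_eq_toReal_spectralRadius T
  set ρ := (spectralRadius ℂ T).toReal
  by_contra hρ
  have hρ_pos : 0 < ρ := by
    rw [← hμρ, norm_pos_iff]
    rintro rfl
    exact hρ (by simpa [← hμρ] using hμ)
  have hnorm : ∀ t : ℝ, 1 < t → ‖(t : ℂ) * μ‖ = t * ρ := fun t ht => by
    rw [norm_mul, hμρ, Complex.norm_real, Real.norm_of_nonneg (by linarith)]
  have hlt : ∀ t : ℝ, 1 < t → spectralRadius ℂ T < ‖(t : ℂ) * μ‖₊ := fun t ht =>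
    spectrum.spectralRadius_lt_nnnorm_of_toReal_lt (by rw [hnorm t ht]; exact lt_mul_left hρ_pos ht)
  have hray : Tendsto (fun t : ℝ => (t : ℂ) * μ) (𝓝[>] 1) (𝓝[resolventSet ℂ T] μ) :=
    tendsto_nhdsWithin_iff.mpr ⟨(Continuous.tendsto' (by fun_prop) 1 μ (by simp)).mono_left
      nhdsWithin_le_nhds, eventually_nhdsWithin_of_forall fun t ht =>
        spectrum.mem_resolventSet_of_spectralRadius_lt (hlt t ht)⟩
  have hres : ContinuousAt (fun t : ℝ => resolvent T ((t * ρ : ℝ) : ℂ)) 1 :=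
    ContinuousAt.comp_of_eq (g := resolvent T)
      (spectrum.hasDerivAt_resolvent_const_left (not_not.mp hρ)).continuousAt (by fun_prop)
      (by simp)
  have hbounded : Tendsto (fun t : ℝ => 24 * ‖resolvent T ((t * ρ : ℝ) : ℂ)‖) (𝓝[>] 1)
      (𝓝 (24 * ‖resolvent T ((1 * ρ : ℝ) : ℂ)‖)) :=
    (hres.norm.const_mul 24).tendsto.mono_left nhdsWithin_le_nhds
  refine not_tendsto_atTop_of_tendsto_nhds hbounded (tendsto_atTop_mono' _
    (eventually_nhdsWithin_of_forall fun t ht => ?_)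
    ((spectrum.tendsto_norm_resolvent_atTop hμ).comp hray))
  simpa only [Function.comp_apply, hnorm t ht] using norm_resolvent_le hT (hlt t ht)
end

section
/- Let A be a C*-algebra and let (a_i)_{i ∈ I} be a monotone increasing net of self-adjoint elements of A (indexed by a directed set I) that converges in the weak topology σ(A, A*) to an element a ∈ A. Then (a_i) converges to a in norm: ‖a_i − a‖ → 0. -/
/-!
Put `b i = l - a i`. Each `b i` is self-adjoint, being the weak limit of the positive elements
`a j - a i`, and the net `b` decreases and tends weakly to `0`. On the weak-* compact set `S` of
contractive functionals whose real part is nonnegative on positive elements, the continuous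
functions `φ ↦ re φ (b i)` therefore decrease pointwise to `0`, hence uniformly by Dini's theorem.
This controls `‖b i‖`, because every self-adjoint `b` has `‖b‖ = |re φ b|` for some `φ ∈ S`: if,
say, `‖b‖ ∈ σ(b)`, a norming functional of `t • 1 + b` in the unitization satisfies `re φ 1 = 1`
and `re φ b = ‖b‖`, and a contractive functional with `re φ 1 = 1` has nonnegative real part on
positive elements.
-/

open Filter Topology

section WeakLimit

variable {E : Type*} [NormedAddCommGroup E] [NormedSpace ℂ E] [StarAddMonoid E] [StarModule ℂ E]
  [ContinuousStar E]

noncomputable def StrongDual.conjStar (φ : StrongDual ℂ E) : StrongDual ℂ E :=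
  ((starL ℂ : ℂ ≃L⋆[ℂ] ℂ) : ℂ →L⋆[ℂ] ℂ).comp (φ.comp (starL ℂ : E ≃L⋆[ℂ] E).toContinuousLinearMap)

@[simp]
lemma StrongDual.conjStar_apply (φ : StrongDual ℂ E) (x : E) :
    φ.conjStar x = star (φ (star x)) := rfl

lemma IsSelfAdjoint.of_forall_dual_tendsto {ι : Type*} {L : Filter ι} [L.NeBot] {f : ι → E}
    {x : E} (hf : ∀ᶠ i in L, IsSelfAdjoint (f i))
    (hx : ∀ φ : StrongDual ℂ E, Tendsto (fun i => φ (f i)) L (𝓝 (φ x))) : IsSelfAdjoint x := by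
  refine SeparatingDual.eq_iff_forall_dual_eq.2 fun φ => star_injective (R := ℂ) ?_
  have hconj : Tendsto (fun i => φ.conjStar (f i)) L (𝓝 (star (φ x))) :=
    (hx φ).star.congr' (hf.mono fun i hi => by simp [hi.star_eq])
  simpa using tendsto_nhds_unique (hx φ.conjStar) hconj

end WeakLimit

lemma re_apply_nonneg_of_norm_le_one_of_re_apply_one {E : Type*} [CStarAlgebra E]
    [PartialOrder E] [StarOrderedRing E] {φ : StrongDual ℂ E} (hφ : ‖φ‖ ≤ 1)
    (h1 : (φ 1).re = 1) {x : E} (hx : 0 ≤ x) : 0 ≤ (φ x).re := by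
  have : Nontrivial E := nontrivial_of_ne 1 0 fun h => by simp [h] at h1
  have hgap : ‖algebraMap ℝ E ‖x‖ - x‖ ≤ ‖x‖ := by
    simpa using CStarAlgebra.norm_le_norm_of_nonneg_of_le
      (sub_nonneg.2 (IsSelfAdjoint.of_nonneg hx).le_algebraMap_norm_self) (sub_le_self _ hx)
  have : ‖x‖ - (φ x).re ≤ ‖x‖ :=
    calc ‖x‖ - (φ x).re = (φ (algebraMap ℝ E ‖x‖ - x)).re := by
          simp [Algebra.algebraMap_eq_smul_one, h1]
      _ ≤ ‖φ (algebraMap ℝ E ‖x‖ - x)‖ := Complex.re_le_norm _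
      _ ≤ ‖φ‖ * ‖algebraMap ℝ E ‖x‖ - x‖ := φ.le_opNorm _
      _ ≤ 1 * ‖x‖ := by gcongr
      _ = ‖x‖ := one_mul _
  linarith

lemma exists_dual_re_apply_one_eq_one_re_apply_eq_norm {E : Type*} [NormedRing E]
    [NormedAlgebra ℂ E] [NormOneClass E] [CompleteSpace E] {b : E}
    (hb : (‖b‖ : ℂ) ∈ spectrum ℂ b) :
    ∃ φ : StrongDual ℂ E, ‖φ‖ ≤ 1 ∧ (φ 1).re = 1 ∧ (φ b).re = ‖b‖ := by
  -- As `t + ‖b‖ ∈ σ(t • 1 + b)`, a norming functional of `t • 1 + b` forces equality in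
  -- `re φ 1 ≤ 1` and `re φ b ≤ ‖b‖`; taking `t > 0` keeps `1` visible even when `b = 0`.
  set t : ℝ := ‖b‖ + 1
  set d : E := algebraMap ℂ E t + b
  have hd : 2 * ‖b‖ + 1 ≤ ‖d‖ := by
    have hmem : (‖b‖ : ℂ) + t ∈ spectrum ℂ d := spectrum.add_mem_add_iff.2 hb
    have := spectrum.norm_le_norm_of_mem hmem
    rw [← Complex.ofReal_add, Complex.norm_of_nonneg (by positivity)] at this
    linarith
  obtain ⟨φ, hφ, hφd⟩ := exists_dual_vector'' ℂ d
  have hφ1 : (φ 1).re ≤ 1 :=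
    calc (φ 1).re ≤ ‖φ 1‖ := Complex.re_le_norm _
      _ ≤ ‖φ‖ * ‖(1 : E)‖ := φ.le_opNorm _
      _ ≤ 1 := by simpa using hφ
  have hφb : (φ b).re ≤ ‖b‖ :=
    calc (φ b).re ≤ ‖φ b‖ := Complex.re_le_norm _
      _ ≤ ‖φ‖ * ‖b‖ := φ.le_opNorm _
      _ ≤ ‖b‖ := by nlinarith [norm_nonneg b]
  have hsum : t * (φ 1).re + (φ b).re = ‖d‖ := by
    simpa [d, Algebra.algebraMap_eq_smul_one] using congrArg Complex.re hφd
  refine ⟨φ, hφ, ?_, ?_⟩ <;> nlinarith [norm_nonneg b]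

lemma IsSelfAdjoint.exists_dual_re_apply_one_eq_one_abs_re_apply_eq_norm {E : Type*}
    [CStarAlgebra E] [Nontrivial E] {b : E} (hb : IsSelfAdjoint b) :
    ∃ φ : StrongDual ℂ E, ‖φ‖ ≤ 1 ∧ (φ 1).re = 1 ∧ |(φ b).re| = ‖b‖ := by
  rcases CStarAlgebra.norm_or_neg_norm_mem_spectrum hb with h | h
  · obtain ⟨φ, hφ, hφ1, hφb⟩ :=
      exists_dual_re_apply_one_eq_one_re_apply_eq_norm (spectrum.algebraMap_mem ℂ h)
    exact ⟨φ, hφ, hφ1, by rw [hφb, abs_of_nonneg (norm_nonneg b)]⟩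
  · have hneg : (‖-b‖ : ℂ) ∈ spectrum ℂ (-b) := by
      rw [norm_neg, ← spectrum.neg_eq]
      simpa using spectrum.algebraMap_mem ℂ h
    obtain ⟨φ, hφ, hφ1, hφb⟩ := exists_dual_re_apply_one_eq_one_re_apply_eq_norm hneg
    refine ⟨φ, hφ, hφ1, ?_⟩
    rw [map_neg, Complex.neg_re, norm_neg] at hφb
    rw [← neg_eq_iff_eq_neg.2 hφb.symm, abs_neg, abs_of_nonneg (norm_nonneg b)]

def WeakDual.reNonnegContractions (E : Type*) [SeminormedAddCommGroup E] [NormedSpace ℂ E]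
    [LE E] : Set (WeakDual ℂ E) :=
  WeakDual.toStrongDual ⁻¹' Metric.closedBall 0 1 ∩ {φ | ∀ x, 0 ≤ x → 0 ≤ (φ x).re}

lemma WeakDual.isCompact_reNonnegContractions (E : Type*) [SeminormedAddCommGroup E]
    [NormedSpace ℂ E] [LE E] : IsCompact (WeakDual.reNonnegContractions E) := by
  refine (WeakDual.isCompact_closedBall 0 1).inter_right ?_
  simp only [Set.ofPred_forall]
  exact isClosed_iInter fun x => isClosed_iInter fun _ =>
    isClosed_le continuous_const (Complex.continuous_re.comp (WeakDual.eval_continuous x))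

section NonUnital

variable {A : Type*} [NonUnitalCStarAlgebra A] [PartialOrder A] [StarOrderedRing A]

open scoped CStarAlgebra in
lemma IsSelfAdjoint.exists_mem_reNonnegContractions_norm_eq {b : A} (hb : IsSelfAdjoint b) :
    ∃ φ ∈ WeakDual.reNonnegContractions A, ‖b‖ = |(φ b).re| := by
  obtain ⟨ψ, hψ, hψ1, hψb⟩ := ((Unitization.isSelfAdjoint_inr (R := ℂ)).2 hb)
    |>.exists_dual_re_apply_one_eq_one_abs_re_apply_eq_norm
  let φ : StrongDual ℂ A :=
    (ψ.toLinearMap.comp (Unitization.inrNonUnitalAlgHom ℂ A : A →ₗ[ℂ] A⁺¹)).mkContinuous 1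
      fun x =>
        calc ‖ψ x‖ ≤ ‖ψ‖ * ‖(x : A⁺¹)‖ := ψ.le_opNorm _
          _ ≤ 1 * ‖x‖ := by rw [Unitization.norm_inr]; gcongr
  refine ⟨WeakDual.toStrongDual.symm φ, ⟨?_, fun x hx => ?_⟩, ?_⟩
  · simpa using LinearMap.mkContinuous_norm_le _ zero_le_one _
  · exact re_apply_nonneg_of_norm_le_one_of_re_apply_one hψ hψ1 (Unitization.inr_nonneg_iff.2 hx)
  · rw [Unitization.norm_inr] at hψb
    exact hψb.symm

lemma tendsto_zero_of_antitone_of_forall_dual_tendsto_zero {I : Type*} [Preorder I] {b : I → A}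
    (hb : Antitone b) (hsa : ∀ i, IsSelfAdjoint (b i))
    (hlim : ∀ φ : StrongDual ℂ A, Tendsto (fun i => φ (b i)) atTop (𝓝 0)) :
    Tendsto b atTop (𝓝 0) := by
  have hdini : TendstoUniformlyOn (fun i (φ : WeakDual ℂ A) => (φ (b i)).re) 0 atTop
      (WeakDual.reNonnegContractions A) := by
    refine Antitone.tendstoUniformlyOn_of_forall_tendsto
      (WeakDual.isCompact_reNonnegContractions A)
      (fun i => (Complex.continuous_re.comp (WeakDual.eval_continuous _)).continuousOn)
      (fun φ hφ i j hij => ?_) continuousOn_const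
      (fun φ _ => (Complex.continuous_re.tendsto 0).comp (hlim (WeakDual.toStrongDual φ)))
    have := hφ.2 _ (sub_nonneg.2 (hb hij))
    rw [map_sub, Complex.sub_re] at this
    linarith
  rw [Metric.tendsto_nhds]
  intro ε hε
  filter_upwards [Metric.tendstoUniformlyOn_iff.1 hdini ε hε] with i hi
  obtain ⟨φ, hφ, hnorm⟩ := (hsa i).exists_mem_reNonnegContractions_norm_eq
  simpa [hnorm] using hi φ hφ

end NonUnital

theorem tendsto_norm_of_monotone_selfAdjoint_weak_tendsto_general
    {A : Type*} [NonUnitalCStarAlgebra A] [PartialOrder A] [StarOrderedRing A]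
    {I : Type*} [Preorder I] [IsDirected I (· ≤ ·)] [Nonempty I]
    (a : I → A) (hmono : Monotone a)
    (l : A) (hweak : ∀ φ : A →L[ℂ] ℂ, Tendsto (fun i => φ (a i)) atTop (𝓝 (φ l))) :
    Tendsto a atTop (𝓝 l) := by
  have hgap_sa (i : I) : IsSelfAdjoint (l - a i) :=
    .of_forall_dual_tendsto (L := atTop)
      ((eventually_ge_atTop i).mono fun j hj => .of_nonneg (sub_nonneg.2 (hmono hj)))
      fun φ => by simpa using (hweak φ).sub_const (φ (a i))
  have hgap : Tendsto (fun i => l - a i) atTop (𝓝 0) :=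
    tendsto_zero_of_antitone_of_forall_dual_tendsto_zero
      (fun i j hij => sub_le_sub_left (hmono hij) l) hgap_sa
      fun φ => by simpa using (hweak φ).const_sub (φ l)
  simpa using hgap.const_sub l

/-- A monotone increasing net of self-adjoint elements of a C*-algebra which converges in the
weak topology `σ(A, A*)` converges in norm (to the same limit). -/
theorem tendsto_norm_of_monotone_selfAdjoint_weak_tendsto
    {A : Type*} [NonUnitalCStarAlgebra A] [PartialOrder A] [StarOrderedRing A]
    {I : Type*} [Preorder I] [IsDirected I (· ≤ ·)] [Nonempty I]
    (a : I → A) (hmono : Monotone a) (hsa : ∀ i, IsSelfAdjoint (a i))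
    (l : A) (hweak : ∀ φ : A →L[ℂ] ℂ, Tendsto (fun i => φ (a i)) atTop (𝓝 (φ l))) :
    Tendsto a atTop (𝓝 l) :=
  tendsto_norm_of_monotone_selfAdjoint_weak_tendsto_general a hmono l hweak
end

section
/- Let A be a C*-algebra and let (T(t))_{t≥0} be a C₀-semigroup of positive operators on A. Let μ ∈ ℝ and suppose that for every positive x ∈ A there exists an element a_x ∈ A such that the Bochner integrals ∫₀^t e^{−μs} T(s)x ds converge to a_x in the weak topology σ(A, A*) as t → ∞. Then for every λ ∈ ℂ with Re(λ) ≥ μ and every x ∈ A, the improper integral ∫₀^∞ e^{−λs} T(s)x ds converges in norm, i.e., the limit lim_{t→∞} ∫₀^t e^{−λs} T(s)x ds exists in the norm of A. -/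
open Filter Topology MeasureTheory Set

/-!
For positive `x`, `F t = ∫₀ᵗ e^{-μs} T(s)x ds` is increasing in `t`. Closed convex sets are
weakly closed, so the weak limit `a` dominates every `F t` and lies in the norm closure of the
convex set `⋃ₜ {y | y ≤ F t}`; as `0 ≤ a - F t ≤ a - y` forces `‖a - F t‖ ≤ ‖a - y‖` in a
C*-algebra, `F` converges in norm. Writing `e^{-λs} = c(s) e^{-μs}` with `|c| ≤ 1` and splitting
`c` into four coefficients with values in `[0, 1]`, positivity gives
`‖∫ᵤᵛ e^{-λs} T(s)x ds‖ ≤ 4 ‖F v - F u‖`, so these integrals are Cauchy as well. A general `x` is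
a linear combination of positive elements.
-/

theorem Convex.mem_of_tendsto_weakly {E ι : Type*} [NormedAddCommGroup E] [NormedSpace ℂ E]
    {S : Set E} (hS : Convex ℝ S) (hSc : IsClosed S) {l : Filter ι} [l.NeBot] {g : ι → E}
    {a : E} (hg : ∀ᶠ i in l, g i ∈ S)
    (h : ∀ φ : E →L[ℂ] ℂ, Tendsto (fun i => φ (g i)) l (𝓝 (φ a))) : a ∈ S := by
  have hw : Tendsto (fun i => toWeakSpace ℂ E (g i)) l (𝓝 (toWeakSpace ℂ E a)) := by
    rw [(IsInducing.mk rfl :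
      IsInducing fun (x : WeakSpace ℂ E) (φ : E →L[ℂ] ℂ) => φ x).tendsto_nhds_iff,
      tendsto_pi_nhds]
    exact h
  have ha : toWeakSpace ℂ E a ∈ closure (toWeakSpace ℂ E '' S) :=
    mem_closure_of_tendsto hw (hg.mono fun i hi => mem_image_of_mem _ hi)
  rw [← hS.toWeakSpace_closure ℂ, hSc.closure_eq] at ha
  exact (toWeakSpace ℂ E).injective.mem_set_image.1 ha

theorem intervalIntegral_mono_on {E : Type*} [NormedAddCommGroup E] [NormedSpace ℝ E]
    [PartialOrder E] [IsOrderedAddMonoid E] [IsOrderedModule ℝ E] [OrderClosedTopology E]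
    {μ : Measure ℝ} {f g : ℝ → E} {a b : ℝ} (hab : a ≤ b) (hf : IntervalIntegrable f μ a b)
    (hg : IntervalIntegrable g μ a b) (h : ∀ x ∈ Icc a b, f x ≤ g x) :
    ∫ x in a..b, f x ∂μ ≤ ∫ x in a..b, g x ∂μ := by
  simpa only [intervalIntegral.integral_of_le hab] using
    setIntegral_mono_on hf.1 hg.1 measurableSet_Ioc fun x hx => h x (Ioc_subset_Icc_self hx)

theorem intervalIntegral_nonneg {E : Type*} [NormedAddCommGroup E] [NormedSpace ℝ E]
    [PartialOrder E] [IsOrderedAddMonoid E] [IsOrderedModule ℝ E] [OrderClosedTopology E]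
    {μ : Measure ℝ} [IsLocallyFiniteMeasure μ] {f : ℝ → E} {a b : ℝ} (hab : a ≤ b)
    (hf : IntervalIntegrable f μ a b) (hf0 : ∀ x ∈ Icc a b, 0 ≤ f x) :
    0 ≤ ∫ x in a..b, f x ∂μ := by
  simpa using intervalIntegral_mono_on hab intervalIntegrable_const hf hf0

theorem CauchySeq.of_norm_sub_le_mul {ι E F : Type*} [SemilatticeSup ι] [Nonempty ι]
    [SeminormedAddCommGroup E] [SeminormedAddCommGroup F] {f : ι → E} {g : ι → F}
    (hf : CauchySeq f) {C : ℝ} {i₀ : ι}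
    (h : ∀ i j, i₀ ≤ i → i ≤ j → ‖g j - g i‖ ≤ C * ‖f j - f i‖) : CauchySeq g := by
  rw [Metric.cauchySeq_iff']
  intro ε hε
  obtain ⟨N, hN⟩ := Metric.cauchySeq_iff.1 hf (ε / (|C| + 1)) (by positivity)
  refine ⟨N ⊔ i₀, fun n hn => ?_⟩
  have hfn : ‖f n - f (N ⊔ i₀)‖ < ε / (|C| + 1) := by
    rw [← dist_eq_norm]
    exact hN n (le_sup_left.trans hn) _ le_sup_left
  rw [dist_eq_norm]
  calc ‖g n - g (N ⊔ i₀)‖ ≤ C * ‖f n - f (N ⊔ i₀)‖ := h _ _ le_sup_right hn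
    _ ≤ |C| * (ε / (|C| + 1)) := by gcongr; exact le_abs_self C
    _ < ε := by
      rw [mul_div_assoc', div_lt_iff₀ (by positivity)]
      nlinarith [abs_nonneg C]

section CStarAlgebra

variable {A : Type*} [NonUnitalCStarAlgebra A] [PartialOrder A] [StarOrderedRing A]

theorem tendsto_of_monotone_of_tendsto_weakly {ι : Type*} [Preorder ι] [IsDirectedOrder ι]
    [Nonempty ι] {F : ι → A} {a : A} (hF : Monotone F)
    (hw : ∀ φ : A →L[ℂ] ℂ, Tendsto (fun i => φ (F i)) atTop (𝓝 (φ a))) :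
    Tendsto F atTop (𝓝 a) := by
  have hle : ∀ i, F i ≤ a := fun i =>
    (convex_Ici (F i)).mem_of_tendsto_weakly isClosed_Ici
      ((eventually_ge_atTop i).mono fun _ hj => hF hj) hw
  have hD : Convex ℝ (⋃ i, Iic (F i)) :=
    Monotone.directed_le (fun _ _ hij => Iic_subset_Iic.2 (hF hij)) |>.convex_iUnion
      fun i => convex_Iic (F i)
  have ha : a ∈ closure (⋃ i, Iic (F i)) :=
    hD.closure.mem_of_tendsto_weakly isClosed_closure
      (Eventually.of_forall fun i => subset_closure (mem_iUnion_of_mem i le_rfl)) hw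
  refine Metric.tendsto_nhds.2 fun ε hε => ?_
  obtain ⟨c, hcD, hc⟩ := Metric.mem_closure_iff.1 ha ε hε
  obtain ⟨i₀, hci₀⟩ := mem_iUnion.1 hcD
  filter_upwards [eventually_ge_atTop i₀] with j hj
  have : ‖a - F j‖ ≤ ‖a - c‖ := CStarAlgebra.norm_le_norm_of_nonneg_of_le
    (sub_nonneg.2 (hle j)) (sub_le_sub_left (le_trans hci₀ (hF hj)) a)
  rw [dist_comm, dist_eq_norm]
  exact this.trans_lt (by rwa [← dist_eq_norm])

theorem norm_integral_smul_le_of_nonneg {f : ℝ → A} {g : ℝ → ℝ} {u v : ℝ} (huv : u ≤ v)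
    (hf : ContinuousOn f (Icc u v)) (hg : ContinuousOn g (Icc u v))
    (hf0 : ∀ r ∈ Icc u v, 0 ≤ f r) (hg0 : ∀ r ∈ Icc u v, 0 ≤ g r)
    (hg1 : ∀ r ∈ Icc u v, g r ≤ 1) :
    ‖∫ r in u..v, g r • f r‖ ≤ ‖∫ r in u..v, f r‖ := by
  have hgf : IntervalIntegrable (fun r => g r • f r) volume u v :=
    (hg.smul hf).intervalIntegrable_of_Icc huv
  refine CStarAlgebra.norm_le_norm_of_nonneg_of_le
    (intervalIntegral_nonneg huv hgf fun r hr => smul_nonneg (hg0 r hr) (hf0 r hr)) ?_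
  refine intervalIntegral_mono_on huv hgf (hf.intervalIntegrable_of_Icc huv) fun r hr => ?_
  simpa using smul_le_smul_of_nonneg_right (hg1 r hr) (hf0 r hr)

theorem norm_integral_smul_le_two_mul {f : ℝ → A} {g : ℝ → ℝ} {u v : ℝ} (huv : u ≤ v)
    (hf : ContinuousOn f (Icc u v)) (hg : ContinuousOn g (Icc u v))
    (hf0 : ∀ r ∈ Icc u v, 0 ≤ f r) (hg1 : ∀ r ∈ Icc u v, |g r| ≤ 1) :
    ‖∫ r in u..v, g r • f r‖ ≤ 2 * ‖∫ r in u..v, f r‖ := by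
  have hg_pos : ContinuousOn (fun r => max (g r) 0) (Icc u v) := by fun_prop
  have hg_neg : ContinuousOn (fun r => max (-g r) 0) (Icc u v) := by fun_prop
  have hpos : IntervalIntegrable (fun r => max (g r) 0 • f r) volume u v :=
    (hg_pos.smul hf).intervalIntegrable_of_Icc huv
  have hneg : IntervalIntegrable (fun r => max (-g r) 0 • f r) volume u v :=
    (hg_neg.smul hf).intervalIntegrable_of_Icc huv
  have hsplit : ∫ r in u..v, g r • f r =
      (∫ r in u..v, max (g r) 0 • f r) - ∫ r in u..v, max (-g r) 0 • f r := by
    rw [← intervalIntegral.integral_sub hpos hneg]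
    simp only [← sub_smul, max_zero_sub_max_neg_zero_eq_self]
  have hpos_le := norm_integral_smul_le_of_nonneg huv hf hg_pos hf0
    (fun r _ => le_max_right _ _) fun r hr => max_le ((le_abs_self _).trans (hg1 r hr)) zero_le_one
  have hneg_le := norm_integral_smul_le_of_nonneg huv hf hg_neg hf0
    (fun r _ => le_max_right _ _) fun r hr => max_le ((neg_le_abs _).trans (hg1 r hr)) zero_le_one
  rw [hsplit]
  linarith [norm_sub_le (∫ r in u..v, max (g r) 0 • f r) (∫ r in u..v, max (-g r) 0 • f r)]

theorem norm_integral_smul_le_four_mul {f : ℝ → A} {c : ℝ → ℂ} {u v : ℝ} (huv : u ≤ v)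
    (hf : ContinuousOn f (Icc u v)) (hc : ContinuousOn c (Icc u v))
    (hf0 : ∀ r ∈ Icc u v, 0 ≤ f r) (hc1 : ∀ r ∈ Icc u v, ‖c r‖ ≤ 1) :
    ‖∫ r in u..v, c r • f r‖ ≤ 4 * ‖∫ r in u..v, f r‖ := by
  have hre : ContinuousOn (fun r => (c r).re) (Icc u v) := by fun_prop
  have him : ContinuousOn (fun r => (c r).im) (Icc u v) := by fun_prop
  have hsplit : ∫ r in u..v, c r • f r =
      (∫ r in u..v, (c r).re • f r) + Complex.I • ∫ r in u..v, (c r).im • f r := by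
    have hre_int : IntervalIntegrable (fun r => (c r).re • f r) volume u v :=
      (hre.smul hf).intervalIntegrable_of_Icc huv
    have him_int : IntervalIntegrable (fun r => Complex.I • (c r).im • f r) volume u v :=
      ((him.smul hf).const_smul Complex.I).intervalIntegrable_of_Icc huv
    rw [← intervalIntegral.integral_smul, ← intervalIntegral.integral_add hre_int him_int]
    refine intervalIntegral.integral_congr fun r _ => ?_
    conv_lhs => rw [← Complex.re_add_im (c r)]
    simp only [add_smul, mul_smul, Complex.coe_smul, smul_comm Complex.I]
  have hre_le := norm_integral_smul_le_two_mul huv hf hre hf0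
    fun r hr => (Complex.abs_re_le_norm _).trans (hc1 r hr)
  have him_le := norm_integral_smul_le_two_mul huv hf him hf0
    fun r hr => (Complex.abs_im_le_norm _).trans (hc1 r hr)
  rw [hsplit]
  calc _ ≤ ‖∫ r in u..v, (c r).re • f r‖ + ‖Complex.I • ∫ r in u..v, (c r).im • f r‖ :=
        norm_add_le _ _
    _ ≤ 4 * ‖∫ r in u..v, f r‖ := by
        rw [norm_smul, Complex.norm_I, one_mul]
        linarith

theorem exists_tendsto_integral_smul_of_tendsto_weakly {f : ℝ → A} (hf : ContinuousOn f (Ici 0))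
    (hf0 : ∀ r, 0 ≤ r → 0 ≤ f r) {a : A}
    (ha : ∀ φ : A →L[ℂ] ℂ, Tendsto (fun t => φ (∫ s in (0 : ℝ)..t, f s)) atTop (𝓝 (φ a)))
    {c : ℝ → ℂ} (hc : ContinuousOn c (Ici 0)) (hc1 : ∀ r, 0 ≤ r → ‖c r‖ ≤ 1) :
    ∃ b, Tendsto (fun t => ∫ s in (0 : ℝ)..t, c s • f s) atTop (𝓝 b) := by
  have hIcc : ∀ {u : ℝ}, 0 ≤ u → ∀ v, Icc u v ⊆ Ici 0 := fun hu _ =>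
    Icc_subset_Ici_self.trans (Ici_subset_Ici.2 hu)
  have hsub : ∀ {g : ℝ → A}, ContinuousOn g (Ici 0) → ∀ u v : ℝ, 0 ≤ u → u ≤ v →
      (∫ s in (0 : ℝ)..v, g s) - ∫ s in (0 : ℝ)..u, g s = ∫ s in u..v, g s := fun hg u v hu huv =>
    intervalIntegral.integral_interval_sub_left (μ := volume)
      ((hg.mono (hIcc le_rfl v)).intervalIntegrable_of_Icc (hu.trans huv))
      ((hg.mono (hIcc le_rfl u)).intervalIntegrable_of_Icc hu)
  have hmono : Monotone fun t : Ici (0 : ℝ) => ∫ s in (0 : ℝ)..t, f s := fun u v huv => by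
    rw [← sub_nonneg]
    dsimp only
    rw [hsub hf u v u.2 huv]
    exact intervalIntegral_nonneg huv ((hf.mono (hIcc u.2 v)).intervalIntegrable_of_Icc huv)
      fun r hr => hf0 r (hIcc u.2 v hr)
  have hF : Tendsto (fun t => ∫ s in (0 : ℝ)..t, f s) atTop (𝓝 a) :=
    tendsto_comp_val_Ici_atTop.1 <|
      tendsto_of_monotone_of_tendsto_weakly hmono fun φ => tendsto_comp_val_Ici_atTop.2 (ha φ)
  refine cauchySeq_tendsto_of_complete <| hF.cauchySeq.of_norm_sub_le_mul (C := 4) (i₀ := 0)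
    fun u v hu huv => ?_
  rw [hsub (g := fun s => c s • f s) (hc.smul hf) u v hu huv, hsub hf u v hu huv]
  exact norm_integral_smul_le_four_mul huv (hf.mono (hIcc hu v)) (hc.mono (hIcc hu v))
    (fun r hr => hf0 r (hIcc hu v hr)) fun r hr => hc1 r (hIcc hu v hr)

theorem exists_tendsto_integral_of_forall_nonneg {E : Type*} [NormedAddCommGroup E]
    [NormedSpace ℂ E] (T : ℝ → A →L[ℂ] E) (hT : ∀ x, ContinuousOn (fun t => T t x) (Ici 0))
    (h : ∀ x, 0 ≤ x → ∃ b, Tendsto (fun t => ∫ s in (0 : ℝ)..t, T s x) atTop (𝓝 b)) (x : A) :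
    ∃ b, Tendsto (fun t => ∫ s in (0 : ℝ)..t, T s x) atTop (𝓝 b) := by
  have hx : x ∈ Submodule.span ℂ {a : A | 0 ≤ a} := by
    rw [CStarAlgebra.span_nonneg]
    trivial
  induction hx using Submodule.span_induction with
  | mem y hy => exact h y hy
  | zero => exact ⟨0, by simp⟩
  | add y z _ _ hy hz =>
    obtain ⟨b, hb⟩ := hy
    obtain ⟨d, hd⟩ := hz
    refine ⟨b + d, (hb.add hd).congr' ?_⟩
    filter_upwards [eventually_ge_atTop 0] with t ht
    simp only [map_add]
    exact (intervalIntegral.integral_add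
      (((hT y).mono Icc_subset_Ici_self).intervalIntegrable_of_Icc ht)
      (((hT z).mono Icc_subset_Ici_self).intervalIntegrable_of_Icc ht)).symm
  | smul z y _ hy =>
    obtain ⟨b, hb⟩ := hy
    exact ⟨z • b, by simpa only [map_smul, intervalIntegral.integral_smul] using hb.const_smul z⟩

end CStarAlgebra

theorem norm_convergence_of_weak_convergence_of_positive_semigroup_general
    {A : Type*} [NonUnitalCStarAlgebra A] [PartialOrder A] [StarOrderedRing A]
    (T : ℝ → A →L[ℂ] A)
    (hTcont : ∀ x : A, ContinuousOn (fun t => T t x) (Set.Ici 0))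
    (hTpos : ∀ t : ℝ, 0 ≤ t → ∀ x : A, 0 ≤ x → 0 ≤ T t x)
    (μ : ℝ)
    (hweak : ∀ x : A, 0 ≤ x → ∃ a : A, ∀ φ : A →L[ℂ] ℂ,
      Tendsto (fun t : ℝ => φ (∫ s in (0:ℝ)..t, Real.exp (-(μ * s)) • T s x))
        atTop (𝓝 (φ a))) :
    ∀ lam : ℂ, μ ≤ lam.re → ∀ x : A, ∃ b : A,
      Tendsto (fun t : ℝ => ∫ s in (0:ℝ)..t, Complex.exp (-(lam * s)) • T s x)
        atTop (𝓝 b) := by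
  intro lam hlam
  refine exists_tendsto_integral_of_forall_nonneg (fun s => Complex.exp (-(lam * s)) • T s)
    (fun x => (by fun_prop : Continuous fun s : ℝ => Complex.exp (-(lam * s))).continuousOn.smul
      (hTcont x)) fun x hx => ?_
  obtain ⟨a, ha⟩ := hweak x hx
  have hfactor : ∀ s : ℝ, Complex.exp (-((lam - μ) * s)) • Real.exp (-(μ * s)) • T s x =
      Complex.exp (-(lam * s)) • T s x := fun s => by
    rw [← Complex.coe_smul, smul_smul, Complex.ofReal_exp, ← Complex.exp_add]
    congr 2
    push_cast
    ring
  have hbound : ∀ r : ℝ, 0 ≤ r → ‖Complex.exp (-((lam - μ) * r))‖ ≤ 1 := fun r hr => by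
    rw [Complex.norm_exp, Real.exp_le_one_iff]
    simpa using mul_nonneg (sub_nonneg.2 hlam) hr
  simpa only [smul_apply, hfactor] using exists_tendsto_integral_smul_of_tendsto_weakly
    (f := fun s => Real.exp (-(μ * s)) • T s x)
    ((by fun_prop : Continuous fun s : ℝ => Real.exp (-(μ * s))).continuousOn.smul (hTcont x))
    (fun r hr => smul_nonneg (Real.exp_nonneg _) (hTpos r hr x hx)) ha
    (by fun_prop : Continuous fun s : ℝ => Complex.exp (-((lam - μ) * s))).continuousOn hbound

/-- Let `(T(t))_{t ≥ 0}` be a `C₀`-semigroup of positive operators on a C*-algebra `A` and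
`μ ∈ ℝ`. If for every positive `x` the integrals `∫₀ᵗ e^{-μs} T(s)x ds` converge weakly as
`t → ∞`, then for every `λ` with `Re λ ≥ μ` and every `x ∈ A` the integrals
`∫₀ᵗ e^{-λs} T(s)x ds` converge in norm as `t → ∞`. -/
theorem norm_convergence_of_weak_convergence_of_positive_semigroup
    {A : Type*} [NonUnitalCStarAlgebra A] [PartialOrder A] [StarOrderedRing A]
    (T : ℝ → A →L[ℂ] A)
    (hT0 : T 0 = 1)
    (hTadd : ∀ s t : ℝ, 0 ≤ s → 0 ≤ t → T (s + t) = T s ∘L T t)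
    (hTcont : ∀ x : A, ContinuousOn (fun t => T t x) (Set.Ici 0))
    (hTpos : ∀ t : ℝ, 0 ≤ t → ∀ x : A, 0 ≤ x → 0 ≤ T t x)
    (μ : ℝ)
    (hweak : ∀ x : A, 0 ≤ x → ∃ a : A, ∀ φ : A →L[ℂ] ℂ,
      Tendsto (fun t : ℝ => φ (∫ s in (0:ℝ)..t, Real.exp (-(μ * s)) • T s x))
        atTop (𝓝 (φ a))) :
    ∀ lam : ℂ, μ ≤ lam.re → ∀ x : A, ∃ b : A,
      Tendsto (fun t : ℝ => ∫ s in (0:ℝ)..t, Complex.exp (-(lam * s)) • T s x)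
        atTop (𝓝 b) :=
  norm_convergence_of_weak_convergence_of_positive_semigroup_general T hTcont hTpos μ hweak
end
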